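/- arXiv:2108.07410 — 5 statements merged into one kernel-verified Lean document; each statement's English description precedes it below -/
import Mathlib

section
/- Let ω : ℝ≥0 → ℝ≥0 be a nonnegative function, and let α, T, t₀, K₀ > 0 be constants such that for all t ≥ t₀, max(ω(t)^(1+α), ω(t+T)^(1+α)) ≤ K₀·(ω(t) − ω(t+T)). Then for all t ≥ t₀, ω(t+T)^(−α) − ω(t)^(−α) ≥ α/K₀ (where we interpret the conclusion under the assumption ω(t), ω(t+T) > 0). -/
/-! The map `x ↦ x ^ (-α)` is convex, so its tangent line at `b = ω t` gives
`a ^ (-α) - b ^ (-α) ≥ α b ^ (-α - 1) (b - a)` for `a = ω (t + T)`, while the difference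
inequality bounds `b - a` below by `b ^ (1 + α) / K₀`; the powers of `b` cancel. -/

namespace Real

theorem one_add_mul_one_sub_le_rpow_neg {u α : ℝ} (hu : 0 < u) (hα : 0 ≤ α) :
    1 + α * (1 - u) ≤ u ^ (-α) := calc
  1 + α * (1 - u) ≤ 1 + -α * log u := by nlinarith [log_le_sub_one_of_pos hu]
  _ ≤ exp (log u * -α) := by linarith [add_one_le_exp (log u * -α)]
  _ = u ^ (-α) := (rpow_def_of_pos hu _).symm

theorem mul_rpow_sub_one_mul_sub_le_rpow_neg_sub {x y α : ℝ} (hx : 0 < x) (hy : 0 < y)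
    (hα : 0 ≤ α) : α * x ^ (-α - 1) * (x - y) ≤ y ^ (-α) - x ^ (-α) := by
  have hxα : 0 < x ^ (-α) := rpow_pos_of_pos hx _
  have key : x ^ (-α) * (1 + α * (1 - y / x)) ≤ x ^ (-α) * (y / x) ^ (-α) :=
    mul_le_mul_of_nonneg_left (one_add_mul_one_sub_le_rpow_neg (div_pos hy hx) hα) hxα.le
  rw [div_rpow hy.le hx.le, mul_div_cancel₀ _ hxα.ne'] at key
  rw [rpow_sub_one hx.ne']
  field_simp at key ⊢
  linarith

theorem div_le_rpow_neg_sub_rpow_neg_of_rpow_le {a b α K : ℝ} (ha : 0 < a) (hb : 0 < b)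
    (hα : 0 ≤ α) (hK : 0 < K) (h : b ^ (1 + α) ≤ K * (b - a)) :
    α / K ≤ a ^ (-α) - b ^ (-α) := calc
  α / K = α * b ^ (-α - 1) * (b ^ (1 + α) / K) := by
    rw [mul_assoc, ← mul_div_assoc, ← rpow_add hb, show -α - 1 + (1 + α) = 0 by ring, rpow_zero,
      mul_one_div]
  _ ≤ α * b ^ (-α - 1) * (b - a) := by
    gcongr
    exact (div_le_iff₀' hK).mpr h
  _ ≤ a ^ (-α) - b ^ (-α) := mul_rpow_sub_one_mul_sub_le_rpow_neg_sub hb ha hα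

end Real

theorem stmt_0_general (ω : ℝ → ℝ)
    (α T t₀ K₀ : ℝ) (hα : 0 < α) (hK₀ : 0 < K₀)
    (hdiff : ∀ t ≥ t₀, max ((ω t) ^ (1 + α)) ((ω (t + T)) ^ (1 + α))
        ≤ K₀ * (ω t - ω (t + T)))
    (t : ℝ) (ht : t₀ ≤ t) (h₁ : 0 < ω t) (h₂ : 0 < ω (t + T)) :
    α / K₀ ≤ (ω (t + T)) ^ (-α) - (ω t) ^ (-α) :=
  Real.div_le_rpow_neg_sub_rpow_neg_of_rpow_le h₂ h₁ hα.le hK₀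
    ((le_max_left _ _).trans (hdiff t ht))

theorem stmt_0 (ω : ℝ → ℝ) (hω : ∀ t ≥ (0:ℝ), 0 ≤ ω t)
    (α T t₀ K₀ : ℝ) (hα : 0 < α) (hT : 0 < T) (ht₀ : 0 < t₀) (hK₀ : 0 < K₀)
    (hdiff : ∀ t ≥ t₀, max ((ω t) ^ (1 + α)) ((ω (t + T)) ^ (1 + α))
        ≤ K₀ * (ω t - ω (t + T)))
    (t : ℝ) (ht : t₀ ≤ t) (h₁ : 0 < ω t) (h₂ : 0 < ω (t + T)) :
    α / K₀ ≤ (ω (t + T)) ^ (-α) - (ω t) ^ (-α) :=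
  stmt_0_general ω α T t₀ K₀ hα hK₀ hdiff t ht h₁ h₂
end

section
/- Let ω : ℝ≥0 → ℝ≥0 be nonincreasing and suppose there exist constants α, T, t₀, K₀ > 0 such that for all t ≥ t₀, ω(t)^(1+α) ≤ K₀·(ω(t) − ω(t+T)). Then for all t ≥ t₀ + 2T, ω(t) ≤ ( ω(t₀)^(−α) + (α/(T·K₀))·(t − t₀ − 2T) )^(−1/α), provided ω(t₀) > 0, and ω(t) = 0 for all t ≥ t₀ if ω(t₀) = 0. -/
open Real

lemma tangent_ineq (α a b : ℝ) (hα : 0 < α) (hb : 0 < b) (hba : b < a) :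
    α * a ^ (-α - 1) * (a - b) ≤ b ^ (-α) - a ^ (-α) := by
  have ha : 0 < a := hb.trans hba
  obtain ⟨c, hc, hceq⟩ := exists_hasDerivAt_eq_slope (fun x => x ^ (-α))
    (fun x => (-α) * x ^ (-α - 1)) hba
    (fun x hx => (Real.continuousAt_rpow_const x (-α)
      (Or.inl (ne_of_gt (lt_of_lt_of_le hb hx.1)))).continuousWithinAt)
    (fun x hx => Real.hasDerivAt_rpow_const (Or.inl (ne_of_gt (hb.trans hx.1))))
  have hcpos : 0 < c := hb.trans hc.1
  have hab : a - b ≠ 0 := by linarith [hba]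
  have heq : b ^ (-α) - a ^ (-α) = α * c ^ (-α - 1) * (a - b) := by
    field_simp at hceq
    nlinarith [hceq]
  have hle : a ^ (-α - 1) ≤ c ^ (-α - 1) :=
    Real.rpow_le_rpow_of_nonpos hcpos hc.2.le (by linarith)
  rw [heq]
  have h0 : 0 ≤ a - b := by linarith
  have := mul_le_mul_of_nonneg_right (mul_le_mul_of_nonneg_left hle hα.le) h0
  linarith

lemma step_ineq (α K a b : ℝ) (hα : 0 < α) (hK : 0 < K) (hb : 0 < b) (hba : b ≤ a)
    (h : a ^ (1 + α) ≤ K * (a - b)) : a ^ (-α) + α / K ≤ b ^ (-α) := by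
  have ha : 0 < a := lt_of_lt_of_le hb hba
  have hlt : b < a := by
    rcases eq_or_lt_of_le hba with h' | h'
    · exfalso
      have hp : (0:ℝ) < a ^ (1 + α) := Real.rpow_pos_of_pos ha _
      rw [h'] at h
      nlinarith
    · exact h'
  have h1 := tangent_ineq α a b hα hb hlt
  have h2 : a ^ (-α - 1) * a ^ (1 + α) = 1 := by
    rw [← Real.rpow_add ha]; ring_nf; exact Real.rpow_zero a
  have h3 : 0 < a ^ (-α - 1) := Real.rpow_pos_of_pos ha _
  have h4 : α / K ≤ α * a ^ (-α - 1) * (a - b) := by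
    rw [div_le_iff₀ hK]
    have := mul_le_mul_of_nonneg_left h (mul_pos hα h3).le
    nlinarith
  linarith

theorem stmt_2 (ω : ℝ → ℝ) (hω : ∀ t ≥ (0:ℝ), 0 ≤ ω t)
    (hmono : ∀ s t : ℝ, 0 ≤ s → s ≤ t → ω t ≤ ω s)
    (α T t₀ K₀ : ℝ) (hα : 0 < α) (hT : 0 < T) (ht₀ : 0 < t₀) (hK₀ : 0 < K₀)
    (hdiff : ∀ t ≥ t₀, (ω t) ^ (1 + α) ≤ K₀ * (ω t - ω (t + T))) :
    (0 < ω t₀ →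
      ∀ t ≥ t₀ + 2 * T,
        ω t ≤ ((ω t₀) ^ (-α) + (α / (T * K₀)) * (t - t₀ - 2 * T)) ^ (-1 / α)) ∧
    (ω t₀ = 0 → ∀ t ≥ t₀, ω t = 0) := by
  constructor
  · intro h0 t ht
    set y : ℕ → ℝ := fun n => ω (t₀ + n * T) with hy
    have hy0 : y 0 = ω t₀ := by simp [hy]
    have hynn : ∀ n : ℕ, 0 ≤ y n := by
      intro n
      apply hω
      have : (0:ℝ) ≤ (n:ℝ) * T := by positivity
      linarith
    have key : ∀ n : ℕ, y n = 0 ∨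
        (0 < y n ∧ (ω t₀) ^ (-α) + n * (α / K₀) ≤ (y n) ^ (-α)) := by
      intro n
      induction n with
      | zero => right; exact ⟨by simpa [hy0] using h0, by simp [hy0]⟩
      | succ n ih =>
        by_cases hz : y (n + 1) = 0
        · left; exact hz
        · right
          have hpos : 0 < y (n + 1) := lt_of_le_of_ne (hynn _) (Ne.symm hz)
          have hmn : y (n + 1) ≤ y n := by
            apply hmono
            · have : (0:ℝ) ≤ (n:ℝ) * T := by positivity
              linarith
            · push_cast; nlinarith
          have hnpos : 0 < y n := lt_of_lt_of_le hpos hmn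
          rcases ih with hzn | ⟨_, ih⟩
          · exact absurd hzn hnpos.ne'
          have hd := hdiff (t₀ + n * T) (by
            have h : (0:ℝ) ≤ (n:ℝ) * T := by positivity
            linarith)
          have e : t₀ + n * T + T = t₀ + ((n : ℕ) + 1 : ℕ) * T := by push_cast; ring
          rw [e] at hd
          have hstep := step_ineq α K₀ (y n) (y (n + 1)) hα hK₀ hpos hmn hd
          refine ⟨hpos, ?_⟩
          push_cast
          push_cast at ih
          linarith
    set n := ⌊(t - t₀) / T⌋₊ with hn
    have htnn : (0:ℝ) ≤ (t - t₀) / T := by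
      apply div_nonneg _ hT.le
      nlinarith
    have hn1 : (n : ℝ) ≤ (t - t₀) / T := Nat.floor_le htnn
    have hn2 : (t - t₀) / T < (n : ℝ) + 1 := Nat.lt_floor_add_one ((t - t₀) / T)
    have hle1 : (n : ℝ) * T ≤ t - t₀ := by
      rw [← le_div_iff₀ hT]; exact hn1
    have hle2 : t - t₀ - 2 * T ≤ (n : ℝ) * T := by
      have : t - t₀ < ((n : ℝ) + 1) * T := by
        rw [← div_lt_iff₀ hT]; exact hn2
      nlinarith
    have hωt : ω t ≤ y n := by
      apply hmono
      · have : (0:ℝ) ≤ (n:ℝ) * T := by positivity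
        linarith
      · linarith
    set D := (ω t₀) ^ (-α) + (α / (T * K₀)) * (t - t₀ - 2 * T) with hD
    have hDpos : 0 < D := by
      have h1 : 0 < (ω t₀) ^ (-α) := Real.rpow_pos_of_pos h0 _
      have h2 : 0 ≤ (α / (T * K₀)) * (t - t₀ - 2 * T) := by
        apply mul_nonneg (by positivity)
        linarith
      rw [hD]; linarith
    have hDE : D ≤ (ω t₀) ^ (-α) + n * (α / K₀) := by
      have h1 : (α / (T * K₀)) * (t - t₀ - 2 * T) ≤ (α / (T * K₀)) * ((n : ℝ) * T) :=
        mul_le_mul_of_nonneg_left hle2 (by positivity)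
      have h2 : (α / (T * K₀)) * ((n : ℝ) * T) = n * (α / K₀) := by
        field_simp
      rw [hD]; linarith
    rcases key n with hzn | ⟨hnpos, hb⟩
    · have : ω t ≤ 0 := by rw [hzn] at hωt; exact hωt
      have h2 : 0 ≤ D ^ (-1 / α) := Real.rpow_nonneg hDpos.le _
      linarith
    · have hDyn : D ≤ (y n) ^ (-α) := le_trans hDE hb
      have h1 : ((y n) ^ (-α)) ^ (-1 / α) ≤ D ^ (-1 / α) :=
        Real.rpow_le_rpow_of_nonpos hDpos hDyn (by
          apply div_nonpos_of_nonpos_of_nonneg <;> linarith)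
      have h2 : ((y n) ^ (-α)) ^ (-1 / α) = y n := by
        rw [← Real.rpow_mul hnpos.le]
        have : -α * (-1 / α) = 1 := by field_simp
        rw [this, Real.rpow_one]
      rw [h2] at h1
      linarith
  · intro h0 t ht
    have h1 := hmono t₀ t ht₀.le ht
    have h2 := hω t (by linarith)
    linarith
end

section
/- Let h : ℝ≥0 → ℝ>0 be positive and monotone (nonincreasing or nondecreasing), and let ω : ℝ≥0 → ℝ>0 satisfy ω(t+T)^(−α) − ω(t)^(−α) ≥ α/h(t) for all t ≥ t₀, where α, T, t₀ > 0. Then for all t ≥ t₀ + 2T, ω(t)^(−α) ≥ inf_{s ∈ [t₀, t₀+T]} ω(s)^(−α) + (α/T)·∫_{t₀+T}^{t−T} ds/h(s). -/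
open MeasureTheory intervalIntegral Finset

theorem stmt_3 (h ω : ℝ → ℝ)
    (hhpos : ∀ t ≥ (0:ℝ), 0 < h t)
    (hhmono : (∀ s t : ℝ, 0 ≤ s → s ≤ t → h t ≤ h s) ∨
              (∀ s t : ℝ, 0 ≤ s → s ≤ t → h s ≤ h t))
    (hωpos : ∀ t ≥ (0:ℝ), 0 < ω t)
    (α T t₀ : ℝ) (hα : 0 < α) (hT : 0 < T) (ht₀ : 0 < t₀)
    (hdiff : ∀ t ≥ t₀, α / h t ≤ (ω (t + T)) ^ (-α) - (ω t) ^ (-α)) :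
    ∀ t ≥ t₀ + 2 * T,
      sInf ((fun s => (ω s) ^ (-α)) '' Set.Icc t₀ (t₀ + T)) +
        (α / T) * ∫ s in (t₀ + T)..(t - T), 1 / h s ≤ (ω t) ^ (-α) := by
  intro t ht
  -- integrability of 1/h on subintervals of [0,∞)
  have hinteg : ∀ a b : ℝ, 0 ≤ a → a ≤ b →
      IntervalIntegrable (fun x => 1 / h x) volume a b := by
    intro a b ha hab
    rcases hhmono with hd | hi
    · apply MonotoneOn.intervalIntegrable
      rw [Set.uIcc_of_le hab]
      intro x hx y hy hxy
      exact one_div_le_one_div_of_le (hhpos y (ha.trans hy.1)) (hd x y (ha.trans hx.1) hxy)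
    · apply AntitoneOn.intervalIntegrable
      rw [Set.uIcc_of_le hab]
      intro x hx y hy hxy
      exact one_div_le_one_div_of_le (hhpos x (ha.trans hx.1)) (hi x y (ha.trans hx.1) hxy)
  -- choose n, s with t = s + (n+1)T, s ∈ [t₀, t₀+T)
  set n : ℕ := ⌊(t - t₀ - T) / T⌋₊ with hn
  have hx0 : (1:ℝ) ≤ (t - t₀ - T) / T := by
    rw [le_div_iff₀ hT]; linarith
  have h1 : (n:ℝ) ≤ (t - t₀ - T) / T := Nat.floor_le (by linarith)
  have h2 : (t - t₀ - T) / T < (n:ℝ) + 1 := Nat.lt_floor_add_one _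
  have hn1 : 1 ≤ n := Nat.le_floor (by exact_mod_cast hx0)
  have h1' : (n:ℝ) * T ≤ t - t₀ - T := by
    rw [le_div_iff₀ hT] at h1; exact h1
  have h2' : t - t₀ - T < ((n:ℝ) + 1) * T := by
    rw [div_lt_iff₀ hT] at h2; exact h2
  set s : ℝ := t - ((n:ℝ) + 1) * T with hs
  have hs1 : t₀ ≤ s := by simp only [hs]; nlinarith
  have hs2 : s ≤ t₀ + T := by simp only [hs]; nlinarith
  have hs0 : 0 ≤ s := le_trans ht₀.le hs1
  -- telescoping the difference inequality
  have key1 : ∀ m : ℕ, ∀ u : ℝ, t₀ ≤ u →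
      ω u ^ (-α) + α * ∑ k ∈ Finset.range m, 1 / h (u + (k:ℝ) * T) ≤ ω (u + (m:ℝ) * T) ^ (-α) := by
    intro m
    induction m with
    | zero => intro u hu; simp
    | succ m ih =>
      intro u hu
      have hum : t₀ ≤ u + (m:ℝ) * T := by nlinarith [Nat.cast_nonneg (α := ℝ) m, hT]
      have hd := hdiff (u + (m:ℝ) * T) hum
      have hih := ih u hu
      have heq : u + ((m:ℕ) + 1 : ℕ) * T = (u + (m:ℝ) * T) + T := by push_cast; ring
      rw [Finset.sum_range_succ, heq]
      have hmul : α * (1 / h (u + (m:ℝ) * T)) = α / h (u + (m:ℝ) * T) := by ring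
      nlinarith [hd, hih]
  -- auxiliary: one-step integral bound
  have step_le : ∀ u c : ℝ, 0 ≤ u → (∀ x ∈ Set.Icc u (u + T), 1 / h x ≤ c) →
      (∫ x in u..(u + T), 1 / h x) ≤ T * c := by
    intro u c hu hb
    have := intervalIntegral.integral_mono_on (by linarith : u ≤ u + T)
      (hinteg u (u + T) hu (by linarith)) (_root_.intervalIntegrable_const (c := c)) hb
    simpa [mul_comm] using this
  -- positivity of 1/h on [0,∞)
  have hpos1h : ∀ x : ℝ, 0 ≤ x → 0 < 1 / h x := fun x hx => by
    have := hhpos x hx; positivity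
  -- the integral bound
  have key2 : (∫ x in s..(s + (n:ℝ) * T), 1 / h x) ≤
      T * ∑ k ∈ Finset.range (n + 1), 1 / h (s + (k:ℝ) * T) := by
    rcases hhmono with hd | hi
    · -- h nonincreasing: 1/h nondecreasing, bound each cell by right endpoint
      have K : ∀ m : ℕ, ∀ u : ℝ, 0 ≤ u →
          (∫ x in u..(u + (m:ℝ) * T), 1 / h x) ≤
            T * ∑ k ∈ Finset.range m, 1 / h (u + ((k:ℝ) + 1) * T) := by
        intro m
        induction m with
        | zero => intro u hu; simp
        | succ m ih =>
          intro u hu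
          have hmT : 0 ≤ (m:ℝ) * T := by positivity
          have heq : u + ((m:ℕ) + 1 : ℕ) * T = (u + (m:ℝ) * T) + T := by push_cast; ring
          rw [heq, ← intervalIntegral.integral_add_adjacent_intervals
            (hinteg u (u + (m:ℝ) * T) hu (by linarith))
            (hinteg (u + (m:ℝ) * T) ((u + (m:ℝ) * T) + T) (by linarith) (by linarith))]
          have hstep := step_le (u + (m:ℝ) * T) (1 / h ((u + (m:ℝ) * T) + T)) (by linarith)
            (by
              intro x hx
              have hx0 : (0:ℝ) ≤ x := le_trans (by linarith) hx.1
              exact one_div_le_one_div_of_le (hhpos _ (by linarith)) (hd x _ hx0 hx.2))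
          have hihu := ih u hu
          rw [Finset.sum_range_succ]
          have : u + ((m:ℝ) + 1) * T = (u + (m:ℝ) * T) + T := by ring
          rw [this]
          linarith [hstep, hihu]
      calc (∫ x in s..(s + (n:ℝ) * T), 1 / h x)
          ≤ T * ∑ k ∈ Finset.range n, 1 / h (s + ((k:ℝ) + 1) * T) := K n s hs0
        _ ≤ T * ∑ k ∈ Finset.range (n + 1), 1 / h (s + (k:ℝ) * T) := by
            rw [Finset.sum_range_succ' (fun k => 1 / h (s + (k:ℝ) * T)) n]
            push_cast
            have h0 : 0 < 1 / h (s + 0 * T) := hpos1h _ (by linarith)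
            nlinarith [h0]
    · -- h nondecreasing: 1/h nonincreasing, bound each cell by left endpoint
      have K : ∀ m : ℕ, ∀ u : ℝ, 0 ≤ u →
          (∫ x in u..(u + (m:ℝ) * T), 1 / h x) ≤
            T * ∑ k ∈ Finset.range m, 1 / h (u + (k:ℝ) * T) := by
        intro m
        induction m with
        | zero => intro u hu; simp
        | succ m ih =>
          intro u hu
          have hmT : 0 ≤ (m:ℝ) * T := by positivity
          have heq : u + ((m:ℕ) + 1 : ℕ) * T = (u + (m:ℝ) * T) + T := by push_cast; ring
          rw [heq, ← intervalIntegral.integral_add_adjacent_intervals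
            (hinteg u (u + (m:ℝ) * T) hu (by linarith))
            (hinteg (u + (m:ℝ) * T) ((u + (m:ℝ) * T) + T) (by linarith) (by linarith))]
          have hstep := step_le (u + (m:ℝ) * T) (1 / h (u + (m:ℝ) * T)) (by linarith)
            (by
              intro x hx
              have hx0 : (0:ℝ) ≤ x := le_trans (by linarith) hx.1
              exact one_div_le_one_div_of_le (hhpos _ (by linarith)) (hi _ x (by linarith) hx.1))
          have hihu := ih u hu
          rw [Finset.sum_range_succ]
          linarith [hstep, hihu]
      calc (∫ x in s..(s + (n:ℝ) * T), 1 / h x)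
          ≤ T * ∑ k ∈ Finset.range n, 1 / h (s + (k:ℝ) * T) := K n s hs0
        _ ≤ T * ∑ k ∈ Finset.range (n + 1), 1 / h (s + (k:ℝ) * T) := by
            rw [Finset.sum_range_succ]
            have h0 : 0 < 1 / h (s + (n:ℝ) * T) := hpos1h _ (by positivity)
            nlinarith [h0]
  -- restrict the integration interval
  have hint_mono : (∫ x in (t₀ + T)..(t - T), 1 / h x) ≤ (∫ x in s..(t - T), 1 / h x) := by
    apply intervalIntegral.integral_mono_interval (c := s) (d := t - T)
      (hs2.trans (by linarith)) (by linarith) le_rfl ?_ (hinteg s (t - T) hs0 (by nlinarith))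
    filter_upwards [ae_restrict_mem measurableSet_Ioc] with x hx
    exact (hpos1h x (le_trans hs0 hx.1.le)).le
  -- sInf is at most the value at s
  have hbdd : BddBelow ((fun s => (ω s) ^ (-α)) '' Set.Icc t₀ (t₀ + T)) := by
    refine ⟨0, ?_⟩
    rintro y ⟨x, hx, rfl⟩
    exact (Real.rpow_pos_of_pos (hωpos x (ht₀.le.trans hx.1)) _).le
  have hInf : sInf ((fun s => (ω s) ^ (-α)) '' Set.Icc t₀ (t₀ + T)) ≤ ω s ^ (-α) :=
    csInf_le hbdd ⟨s, ⟨hs1, hs2⟩, rfl⟩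
  -- telescoped bound at t
  have A := key1 (n + 1) s hs1
  have hst : s + ((n + 1 : ℕ) : ℝ) * T = t := by push_cast; simp only [hs]; ring
  rw [hst] at A
  -- identify the integral endpoint
  have hend : s + (n:ℝ) * T = t - T := by simp only [hs]; ring
  rw [hend] at key2
  have hIle : (∫ x in (t₀ + T)..(t - T), 1 / h x) ≤
      T * ∑ k ∈ Finset.range (n + 1), 1 / h (s + (k:ℝ) * T) := hint_mono.trans key2
  have hαT : 0 ≤ α / T := by positivity
  have hC : (α / T) * (∫ x in (t₀ + T)..(t - T), 1 / h x) ≤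
      α * ∑ k ∈ Finset.range (n + 1), 1 / h (s + (k:ℝ) * T) := by
    have := mul_le_mul_of_nonneg_left hIle hαT
    calc (α / T) * (∫ x in (t₀ + T)..(t - T), 1 / h x)
        ≤ (α / T) * (T * ∑ k ∈ Finset.range (n + 1), 1 / h (s + (k:ℝ) * T)) := this
      _ = α * ∑ k ∈ Finset.range (n + 1), 1 / h (s + (k:ℝ) * T) := by
          rw [← mul_assoc, div_mul_cancel₀ α hT.ne']
  linarith [A, hInf, hC]
end

section
/- Let H be a real inner product space and p ≥ 2. There exists a constant C_p > 0 such that for all x, y ∈ H, ⟨‖x‖^(p−2)·x − ‖y‖^(p−2)·y, x − y⟩ ≥ C_p·‖x − y‖^p. -/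
/-! Expanding with the polarization identity,
`⟪‖x‖^(p-2) x - ‖y‖^(p-2) y, x - y⟫ = (‖x‖^(p-2) + ‖y‖^(p-2)) ‖x-y‖² / 2
  + (‖x‖^(p-2) - ‖y‖^(p-2)) (‖x‖² - ‖y‖²) / 2`.
The second term is nonnegative because both factors have the sign of `‖x‖ - ‖y‖`, and
`‖x - y‖ ≤ 2 max ‖x‖ ‖y‖` bounds `‖x-y‖^(p-2)` by `2^(p-2) (‖x‖^(p-2) + ‖y‖^(p-2))`
in the first, giving the constant `C_p = 2^(1-p)`. -/

open Real

lemma inner_smul_sub_smul_sub_eq {H : Type*} [NormedAddCommGroup H] [InnerProductSpace ℝ H]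
    (s t : ℝ) (x y : H) :
    inner ℝ (s • x - t • y) (x - y) =
      (s + t) * ‖x - y‖ ^ 2 / 2 + (s - t) * (‖x‖ ^ 2 - ‖y‖ ^ 2) / 2 := by
  have hxy : inner ℝ x y = (‖x‖ ^ 2 + ‖y‖ ^ 2 - ‖x - y‖ ^ 2) / 2 := by
    rw [norm_sub_sq_real]; ring
  simp only [inner_sub_left, inner_sub_right, real_inner_smul_left, real_inner_self_eq_norm_sq,
    real_inner_comm x y, hxy]
  ring

lemma rpow_sub_rpow_mul_sq_sub_sq_nonneg {a b q : ℝ} (ha : 0 ≤ a) (hb : 0 ≤ b) (hq : 0 ≤ q) :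
    0 ≤ (a ^ q - b ^ q) * (a ^ 2 - b ^ 2) := by
  rcases le_total a b with hab | hba
  · exact mul_nonneg_of_nonpos_of_nonpos (sub_nonpos.2 (rpow_le_rpow ha hab hq))
      (sub_nonpos.2 (pow_le_pow_left₀ ha hab 2))
  · exact mul_nonneg (sub_nonneg.2 (rpow_le_rpow hb hba hq))
      (sub_nonneg.2 (pow_le_pow_left₀ hb hba 2))

lemma rpow_le_two_rpow_mul_add_of_le_add {a b d q : ℝ} (ha : 0 ≤ a) (hb : 0 ≤ b) (hd : 0 ≤ d)
    (hq : 0 ≤ q) (hdab : d ≤ a + b) :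
    d ^ q ≤ 2 ^ q * (a ^ q + b ^ q) := by
  have hmax : 0 ≤ max a b := le_max_of_le_left ha
  calc d ^ q ≤ (2 * max a b) ^ q :=
        rpow_le_rpow hd (by linarith [le_max_left a b, le_max_right a b]) hq
    _ = 2 ^ q * max (a ^ q) (b ^ q) := by rw [mul_rpow zero_le_two hmax, rpow_max ha hb hq]
    _ ≤ 2 ^ q * (a ^ q + b ^ q) := by
        gcongr
        exact max_le_add_of_nonneg (rpow_nonneg ha q) (rpow_nonneg hb q)

theorem stmt_7 {H : Type*} [NormedAddCommGroup H] [InnerProductSpace ℝ H]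
    (p : ℝ) (hp : 2 ≤ p) :
    ∃ C : ℝ, 0 < C ∧ ∀ x y : H,
      C * ‖x - y‖ ^ p ≤
        inner ℝ (‖x‖ ^ (p - 2) • x - ‖y‖ ^ (p - 2) • y) (x - y) := by
  refine ⟨2 ^ (1 - p), rpow_pos_of_pos two_pos _, fun x y => ?_⟩
  rw [inner_smul_sub_smul_sub_eq]
  have hcross := rpow_sub_rpow_mul_sq_sub_sq_nonneg (norm_nonneg x) (norm_nonneg y)
    (sub_nonneg.2 hp)
  have hbound := rpow_le_two_rpow_mul_add_of_le_add (norm_nonneg x) (norm_nonneg y)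
    (norm_nonneg (x - y)) (sub_nonneg.2 hp) (norm_sub_le x y)
  have hsplit : ‖x - y‖ ^ p = ‖x - y‖ ^ (p - 2) * ‖x - y‖ ^ 2 := by
    rw [← rpow_natCast, ← rpow_add' (norm_nonneg _) (by norm_num; linarith)]
    norm_num
  have htwo : (2 : ℝ) ^ (1 - p) * 2 ^ (p - 2) = 1 / 2 := by
    rw [← rpow_add two_pos]; norm_num
  calc 2 ^ (1 - p) * ‖x - y‖ ^ p
      ≤ 2 ^ (1 - p) * (2 ^ (p - 2) * (‖x‖ ^ (p - 2) + ‖y‖ ^ (p - 2)) * ‖x - y‖ ^ 2) := by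
        rw [hsplit]; gcongr
    _ = (‖x‖ ^ (p - 2) + ‖y‖ ^ (p - 2)) * ‖x - y‖ ^ 2 / 2 := by
        rw [← mul_assoc, ← mul_assoc, htwo]; ring
    _ ≤ _ := by linarith
end

section
/- Let H be a real inner product space and 1 < p < 2. There exists a constant C_p > 0 such that for all x, y ∈ H with (x, y) ≠ (0, 0), ⟨‖x‖^(p−2)·x − ‖y‖^(p−2)·y, x − y⟩ ≥ C_p·‖x − y‖² / (‖x‖ + ‖y‖)^(2−p). -/
/-!
One may take `C = p - 1`. With `a = ‖x‖ ≥ b = ‖y‖` and `t = ⟪x, y⟫`, both sides of the inequality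
are affine in `t`, which ranges over `[-a b, a b]`, so it suffices to check the endpoints
`t = ± a b`. With `q = p - 1 ∈ (0, 1)` these read
`q (a + b) ^ (q - 1) (a - b) ≤ a ^ q - b ^ q`, a consequence of the concavity of `s ↦ s ^ q`,
and `q (a + b) ^ q ≤ a ^ q + b ^ q`, a consequence of its subadditivity.
-/

open Real

lemma add_mul_nonneg_of_abs_le {u v m t : ℝ} (hpos : 0 ≤ u + v * m) (hneg : 0 ≤ u - v * m)
    (ht : |t| ≤ m) : 0 ≤ u + v * t := by
  obtain ⟨htl, htu⟩ := abs_le.mp ht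
  rcases le_total 0 v with hv | hv <;> nlinarith

namespace Real

lemma rpow_le_rpow_add_tangent {q a b : ℝ} (hq0 : 0 ≤ q) (hq1 : q ≤ 1) (ha : 0 < a)
    (hb : 0 ≤ b) : b ^ q ≤ a ^ q + q * a ^ (q - 1) * (b - a) := by
  have amgm : b ^ q * a ^ (1 - q) ≤ q * b + (1 - q) * a :=
    geom_mean_le_arith_mean2_weighted hq0 (by linarith) hb ha.le (by ring)
  have hcancel : a ^ (1 - q) * a ^ (q - 1) = 1 := by
    rw [← rpow_add ha]; norm_num
  have hpow : a * a ^ (q - 1) = a ^ q := by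
    rw [mul_comm, ← rpow_add_one ha.ne']; norm_num
  have := mul_le_mul_of_nonneg_right amgm (rpow_nonneg ha.le (q - 1))
  rw [mul_assoc, hcancel] at this
  linear_combination this + hpow

lemma mul_rpow_sub_one_mul_sub_le_rpow_sub_rpow {q a b : ℝ} (hq0 : 0 ≤ q) (hq1 : q ≤ 1)
    (hb : 0 ≤ b) (hba : b ≤ a) (ha : 0 < a) :
    q * (a + b) ^ (q - 1) * (a - b) ≤ a ^ q - b ^ q := by
  have hmono : (a + b) ^ (q - 1) ≤ a ^ (q - 1) :=
    rpow_le_rpow_of_nonpos ha (by linarith) (by linarith)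
  have := mul_le_mul_of_nonneg_right (mul_le_mul_of_nonneg_left hmono hq0) (sub_nonneg.mpr hba)
  linarith [rpow_le_rpow_add_tangent hq0 hq1 ha hb]

lemma mul_rpow_add_le_rpow_add_rpow {q a b : ℝ} (hq0 : 0 ≤ q) (hq1 : q ≤ 1) (ha : 0 ≤ a)
    (hb : 0 ≤ b) : q * (a + b) ^ q ≤ a ^ q + b ^ q :=
  (mul_le_of_le_one_left (by positivity) hq1).trans (rpow_add_le_add_rpow ha hb hq0 hq1)

lemma sub_one_mul_mul_add_rpow_le_of_abs_le {p a b t : ℝ} (hp1 : 1 < p) (hp2 : p ≤ 2)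
    (hb : 0 ≤ b) (hba : b ≤ a) (ha : 0 < a) (ht : |t| ≤ a * b) :
    (p - 1) * (a ^ 2 - 2 * t + b ^ 2) * (a + b) ^ (p - 2) ≤
      a ^ (p - 2) * a ^ 2 + b ^ (p - 2) * b ^ 2 - (a ^ (p - 2) + b ^ (p - 2)) * t := by
  have hq0 : 0 ≤ p - 1 := by linarith
  have hq1 : p - 1 ≤ 1 := by linarith
  have hexp : p - 1 - 1 = p - 2 := by ring
  have hpow {c : ℝ} (hc : 0 ≤ c) : c ^ (p - 2) * c = c ^ (p - 1) := by
    rw [← rpow_add_one' hc (by linarith)]; ring_nf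
  have hsub := mul_le_mul_of_nonneg_left
    (mul_rpow_sub_one_mul_sub_le_rpow_sub_rpow hq0 hq1 hb hba ha) (sub_nonneg.mpr hba)
  have hadd := mul_le_mul_of_nonneg_left
    (mul_rpow_add_le_rpow_add_rpow hq0 hq1 ha.le hb) (add_nonneg ha.le hb)
  rw [hexp] at hsub
  -- the difference of the two sides is affine in `t`; check it at `t = a b` and `t = -a b`
  have := add_mul_nonneg_of_abs_le (m := a * b)
    (u := a ^ (p - 2) * a ^ 2 + b ^ (p - 2) * b ^ 2 - (p - 1) * (a ^ 2 + b ^ 2) * (a + b) ^ (p - 2))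
    (v := 2 * (p - 1) * (a + b) ^ (p - 2) - a ^ (p - 2) - b ^ (p - 2))
    (by linear_combination hsub - (a - b) * hpow ha.le + (a - b) * hpow hb)
    (by linear_combination hadd - (a + b) * hpow ha.le - (a + b) * hpow hb
      + (p - 1) * (a + b) * hpow (add_nonneg ha.le hb)) ht
  linear_combination this

end Real

section InnerProductSpace

variable {H : Type*} [NormedAddCommGroup H] [InnerProductSpace ℝ H]

lemma sub_one_mul_norm_sub_sq_mul_rpow_le_inner {p : ℝ} (hp1 : 1 < p) (hp2 : p ≤ 2) {x y : H}
    (hxy : ¬(x = 0 ∧ y = 0)) :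
    (p - 1) * ‖x - y‖ ^ 2 * (‖x‖ + ‖y‖) ^ (p - 2) ≤
      inner ℝ (‖x‖ ^ (p - 2) • x - ‖y‖ ^ (p - 2) • y) (x - y) := by
  wlog hyx : ‖y‖ ≤ ‖x‖ generalizing x y
  · have := this (x := y) (y := x) (by tauto) (le_of_not_ge hyx)
    rwa [norm_sub_rev, add_comm, ← inner_neg_neg, neg_sub, neg_sub] at this
  have hx : 0 < ‖x‖ := by
    refine norm_pos_iff.mpr fun hx => hxy ⟨hx, ?_⟩
    simpa [hx] using hyx
  have hinner : inner ℝ (‖x‖ ^ (p - 2) • x - ‖y‖ ^ (p - 2) • y) (x - y) =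
      ‖x‖ ^ (p - 2) * ‖x‖ ^ 2 + ‖y‖ ^ (p - 2) * ‖y‖ ^ 2
        - (‖x‖ ^ (p - 2) + ‖y‖ ^ (p - 2)) * inner ℝ x y := by
    simp only [inner_sub_left, inner_sub_right, real_inner_smul_left,
      real_inner_self_eq_norm_sq, real_inner_comm x y]
    ring
  rw [hinner, norm_sub_sq_real]
  exact sub_one_mul_mul_add_rpow_le_of_abs_le hp1 hp2 (norm_nonneg y) hyx hx
    (abs_real_inner_le_norm x y)

end InnerProductSpace

theorem stmt_8 {H : Type*} [NormedAddCommGroup H] [InnerProductSpace ℝ H]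
    (p : ℝ) (hp1 : 1 < p) (hp2 : p < 2) :
    ∃ C : ℝ, 0 < C ∧ ∀ x y : H, ¬(x = 0 ∧ y = 0) →
      C * ‖x - y‖ ^ 2 / (‖x‖ + ‖y‖) ^ (2 - p) ≤
        inner ℝ (‖x‖ ^ (p - 2) • x - ‖y‖ ^ (p - 2) • y) (x - y) := by
  refine ⟨p - 1, by linarith, fun x y hxy => ?_⟩
  rw [div_eq_mul_inv, ← rpow_neg (by positivity), neg_sub]
  exact sub_one_mul_norm_sub_sq_mul_rpow_le_inner hp1 hp2.le hxy
end
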